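/- arXiv:2005.01408 — 4 statements merged into one kernel-verified Lean document; each statement's English description precedes it below -/
import Mathlib

section
/- For each integer k with 1 ≤ k ≤ 6, the polynomial δ(ζ) = Σ_{j=1}^{k} (1/j)(1-ζ)^j has exactly one zero, namely ζ = 1, on the closed unit disk {ζ ∈ ℂ : |ζ| ≤ 1}. -/
/-!
Since `δ(1) = 0`, write `δ(ζ) = (1 - ζ) q(ζ)`; it remains to see that `q` has no zero with
`|ζ| ≤ 1`. For `k ≤ 3` the constant coefficient of `q` already exceeds the sum of the absolute
values of the others, which rules out zeros in the closed disk. For `k = 4, 5` this holds after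
one Graeffe root-squaring step `q(z) q(-z) = g(z²)`, and for `k = 6` after three such steps; each
step maps the closed disk into itself, so a zero of `q` there would give one of `g`.
-/

open Finset

/-- The generating polynomial of the k-step BDF method. -/
noncomputable def bdfδ (k : ℕ) (ζ : ℂ) : ℂ :=
  ∑ j ∈ Finset.Icc 1 k, (1 / (j : ℂ)) * (1 - ζ) ^ j

section UnitBall

variable {R : Type*} [SeminormedRing R]

def hornerEval : List R → R → R
  | [], _ => 0
  | a :: as, z => a + z * hornerEval as z

def NoRootsInClosedUnitBall (f : R → R) : Prop :=
  ∀ z : R, ‖z‖ ≤ 1 → f z ≠ 0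

theorem norm_hornerEval_le (as : List R) {z : R} (hz : ‖z‖ ≤ 1) :
    ‖hornerEval as z‖ ≤ (as.map (‖·‖)).sum := by
  induction as with
  | nil => simp [hornerEval]
  | cons a as ih =>
    calc ‖a + z * hornerEval as z‖ ≤ ‖a‖ + ‖z‖ * ‖hornerEval as z‖ :=
          (norm_add_le _ _).trans (add_le_add_right (norm_mul_le _ _) _)
      _ ≤ ‖a‖ + 1 * (as.map (‖·‖)).sum := by gcongr
      _ = ((a :: as).map (‖·‖)).sum := by simp

theorem noRootsInClosedUnitBall_hornerEval_cons {a : R} {as : List R}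
    (h : (as.map (‖·‖)).sum < ‖a‖) : NoRootsInClosedUnitBall (hornerEval (a :: as)) := by
  intro z hz h0
  have hza : a = -(z * hornerEval as z) := eq_neg_of_add_eq_zero_left h0
  have : ‖a‖ ≤ (as.map (‖·‖)).sum :=
    calc ‖a‖ ≤ ‖z‖ * ‖hornerEval as z‖ := by rw [hza, norm_neg]; exact norm_mul_le _ _
      _ ≤ 1 * (as.map (‖·‖)).sum := by gcongr; exact norm_hornerEval_le as hz
      _ = _ := one_mul _
  exact h.not_ge this

theorem NoRootsInClosedUnitBall.of_mul_neg_eq {f g : R → R}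
    (hfg : ∀ z, f z * f (-z) = g (z ^ 2)) (hg : NoRootsInClosedUnitBall g) :
    NoRootsInClosedUnitBall f := by
  intro z hz h0
  refine hg (z ^ 2) ?_ (by rw [← hfg, h0, zero_mul])
  calc ‖z ^ 2‖ ≤ ‖z‖ ^ 2 := norm_pow_le' z two_pos
    _ ≤ 1 := pow_le_one₀ (norm_nonneg z) hz

end UnitBall

noncomputable def bdfδDeflated (k : ℕ) (ζ : ℂ) : ℂ :=
  ∑ j ∈ Icc 1 k, (1 / (j : ℂ)) * (1 - ζ) ^ (j - 1)

theorem bdfδ_eq_mul_bdfδDeflated (k : ℕ) (ζ : ℂ) :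
    bdfδ k ζ = (1 - ζ) * bdfδDeflated k ζ := by
  rw [bdfδ, bdfδDeflated, mul_sum]
  refine sum_congr rfl fun j hj => ?_
  obtain ⟨i, rfl⟩ := Nat.exists_eq_add_one_of_ne_zero (by grind : j ≠ 0)
  simp only [Nat.add_sub_cancel, pow_succ]
  ring

theorem bdfδDeflated_zero (ζ : ℂ) : bdfδDeflated 0 ζ = 0 := by
  simp [bdfδDeflated]

theorem bdfδDeflated_succ (k : ℕ) (ζ : ℂ) :
    bdfδDeflated (k + 1) ζ = bdfδDeflated k ζ + 1 / (k + 1 : ℂ) * (1 - ζ) ^ k := by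
  rw [bdfδDeflated, sum_Icc_succ_top (by omega), bdfδDeflated]
  push_cast
  simp

theorem bdfδ_one (k : ℕ) : bdfδ k 1 = 0 := by
  simp [bdfδ_eq_mul_bdfδDeflated]

theorem noRootsInClosedUnitBall_bdfδDeflated {k : ℕ} (hk1 : 1 ≤ k) (hk6 : k ≤ 6) :
    NoRootsInClosedUnitBall (bdfδDeflated k) := by
  interval_cases k
  · exact fun _ _ => by simp [bdfδDeflated]
  · have : bdfδDeflated 2 = hornerEval [3/2, -1/2] := by
      ext ζ
      simp only [bdfδDeflated_succ, bdfδDeflated_zero, hornerEval]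
      ring
    exact this ▸ noRootsInClosedUnitBall_hornerEval_cons (by norm_num)
  · have : bdfδDeflated 3 = hornerEval [11/6, -7/6, 1/3] := by
      ext ζ
      simp only [bdfδDeflated_succ, bdfδDeflated_zero, hornerEval]
      ring
    exact this ▸ noRootsInClosedUnitBall_hornerEval_cons (by norm_num)
  · refine .of_mul_neg_eq (g := hornerEval [625/144, 121/144, 31/144, -1/16])
      (fun ζ => by simp only [bdfδDeflated_succ, bdfδDeflated_zero, hornerEval]; ring) ?_
    exact noRootsInClosedUnitBall_hornerEval_cons (by norm_num)
  · refine .of_mul_neg_eq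
      (g := hornerEval [18769/3600, 10969/3600, 1519/3600, -227/1200, 1/25])
      (fun ζ => by simp only [bdfδDeflated_succ, bdfδDeflated_zero, hornerEval]; ring) ?_
    exact noRootsInClosedUnitBall_hornerEval_cons (by norm_num)
  · refine .of_mul_neg_eq
      (g := hornerEval [2401/400, 2701/400, 551/400, -1441/3600, 73/450, -1/36])
      (fun ζ => by simp only [bdfδDeflated_succ, bdfδDeflated_zero, hornerEval]; ring) ?_
    refine .of_mul_neg_eq (g := hornerEval [5764801/160000, -4649499/160000,
      4440353/480000, 8577431/12960000, 6607/1620000, -1/1296])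
      (fun w => by simp only [hornerEval]; ring) ?_
    refine .of_mul_neg_eq (g := hornerEval [33232930569601/25600000000,
      -13658020023497/76800000000, 257821535238931/2073600000000,
      -68430748838689/167961600000000, 5448199273/5248800000000, -1/1679616])
      (fun u => by simp only [hornerEval]; ring) ?_
    exact noRootsInClosedUnitBall_hornerEval_cons (by norm_num)

/-- For `1 ≤ k ≤ 6`, the BDF polynomial `δ` has exactly one zero on the closed
unit disk, namely `ζ = 1`. -/
theorem stmt_0 (k : ℕ) (hk1 : 1 ≤ k) (hk6 : k ≤ 6) (ζ : ℂ)
    (hζ : ‖ζ‖ ≤ 1) :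
    bdfδ k ζ = 0 ↔ ζ = 1 := by
  refine ⟨fun h => ?_, fun h => h ▸ bdfδ_one k⟩
  rw [bdfδ_eq_mul_bdfδDeflated] at h
  have hdeflated := noRootsInClosedUnitBall_bdfδDeflated hk1 hk6 ζ hζ
  exact (sub_eq_zero.mp ((mul_eq_zero.mp h).resolve_right hdeflated)).symm
end

section
/- For each integer k with 1 ≤ k ≤ 6, the functions M₁(ζ) = (1-ζ)/δ(ζ) and M₂(ζ) = δ(ζ)/(1-ζ) are bounded above and below in modulus by positive constants on the punctured unit circle {ζ ∈ ℂ : |ζ| = 1, ζ ≠ 1}. -/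
open Complex ComplexConjugate Finset

theorem IsCompact.exists_pos_le_norm_le_inv {X E : Type*} [TopologicalSpace X]
    [NormedAddCommGroup E] {K : Set X} (hK : IsCompact K) {f : X → E} (hf : ContinuousOn f K)
    (hf₀ : ∀ x ∈ K, f x ≠ 0) : ∃ c > 0, ∀ x ∈ K, c ≤ ‖f x‖ ∧ ‖f x‖ ≤ c⁻¹ := by
  have hcont : ContinuousOn (fun x => ‖f x‖ + ‖f x‖⁻¹) K :=
    hf.norm.add (hf.norm.inv₀ fun x hx => norm_ne_zero_iff.mpr (hf₀ x hx))
  obtain ⟨B, hB⟩ := hK.exists_bound_of_continuousOn hcont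
  refine ⟨(max B 1)⁻¹, by positivity, fun x hx => ?_⟩
  have hpos : 0 < ‖f x‖ := norm_pos_iff.mpr (hf₀ x hx)
  have hle : ‖f x‖ + ‖f x‖⁻¹ ≤ max B 1 :=
    (le_abs_self _).trans ((hB x hx).trans (le_max_left _ _))
  have hinv : 0 < ‖f x‖⁻¹ := inv_pos.mpr hpos
  rw [inv_inv, inv_le_comm₀ (by positivity) hpos]
  constructor <;> linarith

/-- The removable-singularity extension of `M₂(ζ) = δ(ζ) / (1 - ζ)`. -/
noncomputable def bdfM₂ (k : ℕ) (ζ : ℂ) : ℂ :=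
  ∑ j ∈ range k, (1 / (j + 1 : ℂ)) * (1 - ζ) ^ j

theorem bdfδ_eq_mul_bdfM₂ (k : ℕ) (ζ : ℂ) : bdfδ k ζ = (1 - ζ) * bdfM₂ k ζ := by
  rw [bdfδ, bdfM₂, ← Ico_add_one_right_eq_Icc, sum_Ico_eq_sum_range, mul_sum, Nat.add_sub_cancel]
  refine sum_congr rfl fun j _ => ?_
  push_cast
  ring

theorem continuous_bdfM₂ (k : ℕ) : Continuous (bdfM₂ k) := by
  unfold bdfM₂; fun_prop

theorem conj_bdfM₂ (k : ℕ) (ζ : ℂ) : conj (bdfM₂ k ζ) = bdfM₂ k (conj ζ) := by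
  simp [bdfM₂]

theorem normSq_bdfM₂_eq_mul_inv (k : ℕ) {ζ : ℂ} (hζ : ‖ζ‖ = 1) :
    (normSq (bdfM₂ k ζ) : ℂ) = bdfM₂ k ζ * bdfM₂ k ζ⁻¹ := by
  rw [← mul_conj, conj_bdfM₂, ← inv_eq_conj hζ]

theorem norm_one_sub_sq_of_norm_eq_one {ζ : ℂ} (hζ : ‖ζ‖ = 1) :
    (‖1 - ζ‖ : ℂ) ^ 2 = -(1 - ζ) ^ 2 / ζ := by
  have hζ₀ : ζ ≠ 0 := ne_zero_of_norm_ne_zero (by simp [hζ])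
  rw [← ofReal_pow, Complex.sq_norm, ← mul_conj, map_sub, map_one, ← inv_eq_conj hζ]
  field_simp
  ring

noncomputable def bdfM₂NormSq : ℕ → ℝ → ℝ
  | 1, _ => 1
  | 2, t => 1 + 3/4 * t
  | 3, t => 1 + t/12 + 11/18 * t^2
  | 4, t => 1 + t/12 - 7/18 * t^2 + 25/48 * t^3
  | 5, t => 1 + t/12 + t^2/90 - 57/80 * t^3 + 137/300 * t^4
  | 6, t => 1 + t/12 + t^2/90 + 23/80 * t^3 - 24/25 * t^4 + 49/120 * t^5
  | _, _ => 0

theorem normSq_bdfM₂_eq_bdfM₂NormSq {k : ℕ} (hk1 : 1 ≤ k) (hk6 : k ≤ 6) {ζ : ℂ}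
    (hζ : ‖ζ‖ = 1) :
    normSq (bdfM₂ k ζ) = bdfM₂NormSq k (‖1 - ζ‖ ^ 2) := by
  have hζ₀ : ζ ≠ 0 := ne_zero_of_norm_ne_zero (by simp [hζ])
  apply ofReal_injective
  rw [normSq_bdfM₂_eq_mul_inv k hζ]
  interval_cases k <;>
  · simp only [bdfM₂NormSq, bdfM₂, sum_range_succ, sum_range_zero]
    push_cast [norm_one_sub_sq_of_norm_eq_one hζ]
    field_simp
    ring

theorem bdfM₂NormSq_pos {k : ℕ} (hk1 : 1 ≤ k) (hk6 : k ≤ 6) {t : ℝ} (ht₀ : 0 ≤ t)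
    (ht₄ : t ≤ 4) :
    0 < bdfM₂NormSq k t := by
  interval_cases k <;> simp only [bdfM₂NormSq]
  -- the `k = 6` polynomial attains its minimum `≈ 0.33` near `t = 8/5`
  all_goals nlinarith [mul_nonneg (pow_nonneg ht₀ 3) (sq_nonneg (t - 8/5)),
    mul_nonneg ht₀ (sq_nonneg (t - 8/5)), pow_nonneg ht₀ 3, sq_nonneg t]

theorem bdfM₂_ne_zero {k : ℕ} (hk1 : 1 ≤ k) (hk6 : k ≤ 6) {ζ : ℂ} (hζ : ‖ζ‖ = 1) :
    bdfM₂ k ζ ≠ 0 := by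
  have ht : ‖1 - ζ‖ ≤ 2 := by
    linarith [norm_sub_le (1 : ℂ) ζ, norm_one (α := ℂ)]
  rw [← normSq_pos, normSq_bdfM₂_eq_bdfM₂NormSq hk1 hk6 hζ]
  exact bdfM₂NormSq_pos hk1 hk6 (by positivity) (by nlinarith [norm_nonneg (1 - ζ)])

/-- For `1 ≤ k ≤ 6`, the multipliers `M₁(ζ) = (1-ζ)/δ(ζ)` and
`M₂(ζ) = δ(ζ)/(1-ζ)` are bounded above and below in modulus by positive
constants on the punctured unit circle `{|ζ| = 1, ζ ≠ 1}`. -/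
theorem stmt_1 (k : ℕ) (hk1 : 1 ≤ k) (hk6 : k ≤ 6) :
    ∃ c C : ℝ, 0 < c ∧ 0 < C ∧
      ∀ ζ : ℂ, ‖ζ‖ = 1 → ζ ≠ 1 →
        (c ≤ ‖(1 - ζ) / bdfδ k ζ‖ ∧
          ‖(1 - ζ) / bdfδ k ζ‖ ≤ C) ∧
        (c ≤ ‖bdfδ k ζ / (1 - ζ)‖ ∧
          ‖bdfδ k ζ / (1 - ζ)‖ ≤ C) := by
  obtain ⟨c, hc, hbounds⟩ := (isCompact_sphere (0 : ℂ) 1).exists_pos_le_norm_le_inv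
    (continuous_bdfM₂ k).continuousOn fun ζ hζ => bdfM₂_ne_zero hk1 hk6 (by simpa using hζ)
  refine ⟨c, c⁻¹, hc, inv_pos.mpr hc, fun ζ hζ hζ1 => ?_⟩
  obtain ⟨hlo, hhi⟩ := hbounds ζ (by simpa using hζ)
  have h1ζ : 1 - ζ ≠ 0 := sub_ne_zero.mpr hζ1.symm
  rw [bdfδ_eq_mul_bdfM₂, div_mul_cancel_left₀ h1ζ, mul_div_cancel_left₀ _ h1ζ, norm_inv]
  exact ⟨⟨(le_inv_comm₀ hc (hc.trans_le hlo)).mpr hhi, inv_anti₀ hc hlo⟩, hlo, hhi⟩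
end

section
/- Let λ₀ > 0 and C > 0. There exists a constant C' > 0, independent of the time step τ > 0 and of N, such that for all n with 1 ≤ n ≤ N, τ · Σ_{j=1}^{n} e^{-λ₀ (n+1-j)τ} / ((n+1-j)τ) ≤ C' · log(1 + n). -/
/-! Since `e^{-λ₀ t} ≤ 1`, the factor `τ` cancels against the kernel and the sum is at most the
harmonic number `H_n ≤ 1 + log n`; as `log (1 + n) ≥ log 2` for `n ≥ 1`, this is
`≤ (1 + 1 / log 2) log (1 + n)`. -/

open Finset

lemma sum_Icc_one_div_reflect_eq_harmonic (n : ℕ) :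
    ∑ j ∈ Icc 1 n, (1 : ℝ) / ((n : ℝ) + 1 - j) = harmonic n := by
  rw [harmonic_eq_sum_Icc, Rat.cast_sum]
  refine sum_nbij' (fun j => n + 1 - j) (fun j => n + 1 - j) ?_ ?_ ?_ ?_ ?_ <;>
    intro j hj <;> simp only [mem_Icc] at hj ⊢
  · omega
  · omega
  · omega
  · omega
  · rw [Nat.cast_sub (by omega : j ≤ n + 1)]
    push_cast
    ring

lemma harmonic_le_mul_log_one_add {n : ℕ} (hn : 1 ≤ n) :
    (harmonic n : ℝ) ≤ (1 + 1 / Real.log 2) * Real.log (1 + n) := by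
  have hn' : (1 : ℝ) ≤ n := by exact_mod_cast hn
  have hlog2 : 0 < Real.log 2 := Real.log_pos one_lt_two
  have hlog_n : Real.log n ≤ Real.log (1 + n) := Real.log_le_log (by positivity) (by linarith)
  have hlog2_le : Real.log 2 ≤ Real.log (1 + n) := Real.log_le_log two_pos (by linarith)
  calc (harmonic n : ℝ) ≤ 1 + Real.log n := harmonic_le_one_add_log n
    _ ≤ Real.log (1 + n) / Real.log 2 + Real.log (1 + n) := by
      linarith [(one_le_div hlog2).2 hlog2_le]
    _ = (1 + 1 / Real.log 2) * Real.log (1 + n) := by ring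

lemma mul_exp_neg_mul_div_le_one_div {lam τ k : ℝ} (hlam : 0 ≤ lam) (hτ : 0 < τ) (hk : 0 < k) :
    τ * (Real.exp (-lam * (k * τ)) / (k * τ)) ≤ 1 / k := by
  have hexp : Real.exp (-lam * (k * τ)) ≤ 1 :=
    Real.exp_le_one_iff.2 (by nlinarith [mul_pos hk hτ])
  calc τ * (Real.exp (-lam * (k * τ)) / (k * τ)) ≤ τ * (1 / (k * τ)) := by gcongr
    _ = 1 / k := by field_simp

theorem stmt_4_general (lam : ℝ) (hlam : 0 < lam) :
    ∃ C' : ℝ, 0 < C' ∧ ∀ τ : ℝ, 0 < τ → ∀ N n : ℕ, 1 ≤ n → n ≤ N →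
      τ * ∑ j ∈ Finset.Icc 1 n,
        Real.exp (-lam * (((n : ℝ) + 1 - j) * τ)) / (((n : ℝ) + 1 - j) * τ)
        ≤ C' * Real.log (1 + n) := by
  refine ⟨1 + 1 / Real.log 2, by have := Real.log_pos one_lt_two; positivity, ?_⟩
  intro τ hτ N n hn _
  calc τ * ∑ j ∈ Icc 1 n,
        Real.exp (-lam * (((n : ℝ) + 1 - j) * τ)) / (((n : ℝ) + 1 - j) * τ)
      ≤ ∑ j ∈ Icc 1 n, (1 : ℝ) / ((n : ℝ) + 1 - j) := by
        rw [mul_sum]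
        refine sum_le_sum fun j hj => mul_exp_neg_mul_div_le_one_div hlam.le hτ ?_
        have : (j : ℝ) ≤ n := by exact_mod_cast (mem_Icc.1 hj).2
        linarith
    _ = harmonic n := sum_Icc_one_div_reflect_eq_harmonic n
    _ ≤ (1 + 1 / Real.log 2) * Real.log (1 + n) := harmonic_le_mul_log_one_add hn

/-- Logarithmic bound for the discrete convolution sum
`τ ∑_{j=1}^n e^{-λ₀(n+1-j)τ}/((n+1-j)τ) ≤ C' log(1+n)`,
uniformly in the step size `τ > 0` and in `N`. -/
theorem stmt_4 (lam : ℝ) (hlam : 0 < lam) (C : ℝ) (hC : 0 < C) :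
    ∃ C' : ℝ, 0 < C' ∧ ∀ τ : ℝ, 0 < τ → ∀ N n : ℕ, 1 ≤ n → n ≤ N →
      τ * ∑ j ∈ Finset.Icc 1 n,
        Real.exp (-lam * (((n : ℝ) + 1 - j) * τ)) / (((n : ℝ) + 1 - j) * τ)
        ≤ C' * Real.log (1 + n) :=
  stmt_4_general lam hlam
end

section
/- Let Γ(t,x,y) = ∫_Ω G(t,x,x') δ̃_y(x') dx', where G satisfies the Gaussian bound |G(t,x,y)| ≤ C t^{-d/2} e^{-|x-y|²/(Ct)} and δ̃_y ≥ 0 is supported in a ball of radius h around y with ∫ δ̃_y = 1 and ‖δ̃_y‖_{L^∞} ≤ C h^{-d}. Then for all x, y and t > 0 with max(|x−y|, √t) ≥ 2h, |Γ(t,x,y)| ≤ C' t^{-d/2} e^{-|x-y|²/(C' t)}. -/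
open Real MeasureTheory

/-!
Only the points `x'` of `B(y, h)` contribute, and for them the Gaussian factor
`exp(-|x - x'|² / (C t))` is comparable to `exp(-|x - y|² / (C' t))`. If `|x - y| ≥ 2h` then
`|x - x'| ≥ |x - y| / 2`, which costs a factor `4` in the constant. Otherwise `√t ≥ 2h > |x - y|`,
so `C' exp(-|x - y|² / (C' t)) ≥ C' - 1`, which is at least `C` for `C' = 4C + 1`.
Since `δ̃_y` is a probability density, the pointwise bound passes to the average.
-/

noncomputable def gaussianBound (d : ℕ) (C t r : ℝ) : ℝ :=
  C * t ^ (-(d : ℝ) / 2) * exp (-r ^ 2 / (C * t))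

section GaussianBound

variable {d : ℕ} {C C' t r s : ℝ}

lemma gaussianBound_le_of_le_two_mul (hC : 0 < C) (hCC' : 4 * C ≤ C') (ht : 0 < t)
    (hr : 0 ≤ r) (hrs : r ≤ 2 * s) : gaussianBound d C t s ≤ gaussianBound d C' t r := by
  have hC'C : C ≤ C' := by linarith
  have hC' : 0 < C' := by linarith
  have hexp : -s ^ 2 / (C * t) ≤ -r ^ 2 / (C' * t) := by
    rw [neg_div, neg_div, neg_le_neg_iff, div_le_div_iff₀ (by positivity) (by positivity)]
    have hrs2 : r ^ 2 ≤ 4 * s ^ 2 := by nlinarith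
    nlinarith [mul_le_mul_of_nonneg_right hrs2 (mul_pos hC ht).le,
      mul_le_mul_of_nonneg_right hCC' (mul_nonneg (sq_nonneg s) ht.le)]
  unfold gaussianBound
  gcongr

lemma le_mul_exp_neg_sq_div (hC : 0 ≤ C) (ht : 0 < t) (hrt : r ^ 2 ≤ t) :
    C ≤ (4 * C + 1) * exp (-r ^ 2 / ((4 * C + 1) * t)) := by
  set C' := 4 * C + 1
  have hC' : 0 < C' := by positivity
  have hu : r ^ 2 / (C' * t) ≤ 1 / C' := by
    rw [div_le_div_iff₀ (by positivity) hC']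
    nlinarith
  calc C ≤ C' * (1 - 1 / C') := by
        rw [mul_sub, mul_one_div_cancel hC'.ne']
        linarith
    _ ≤ C' * (-r ^ 2 / (C' * t) + 1) := by gcongr; rw [neg_div]; linarith
    _ ≤ C' * exp (-r ^ 2 / (C' * t)) := by gcongr; exact add_one_le_exp _

lemma gaussianBound_le_of_sq_le (hC : 0 < C) (ht : 0 < t) (hrt : r ^ 2 ≤ t) :
    gaussianBound d C t s ≤ gaussianBound d (4 * C + 1) t r := by
  have hexp : exp (-s ^ 2 / (C * t)) ≤ 1 :=
    exp_le_one_iff.mpr (div_nonpos_of_nonpos_of_nonneg (by nlinarith) (by positivity))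
  calc gaussianBound d C t s ≤ C * t ^ (-(d : ℝ) / 2) * 1 := by
        unfold gaussianBound; gcongr
    _ = t ^ (-(d : ℝ) / 2) * C := by ring
    _ ≤ t ^ (-(d : ℝ) / 2) * ((4 * C + 1) * exp (-r ^ 2 / ((4 * C + 1) * t))) := by
        gcongr; exact le_mul_exp_neg_sq_div hC.le ht hrt
    _ = gaussianBound d (4 * C + 1) t r := by unfold gaussianBound; ring

/-- Here `r = |x - y|`, `s = |x - x'|` and `h` bounds `|x' - y|`. -/
lemma gaussianBound_le_of_lt_add {h : ℝ} (hC : 0 < C) (ht : 0 < t) (hr : 0 ≤ r)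
    (hrs : r < s + h) (hmax : 2 * h ≤ max r √t) :
    gaussianBound d C t s ≤ gaussianBound d (4 * C + 1) t r := by
  rcases le_or_gt (2 * h) r with hfar | hnear
  · exact gaussianBound_le_of_le_two_mul hC (by linarith) ht hr (by linarith)
  · have hsqrt : r < √t := by
      rcases le_max_iff.mp hmax with h' | h' <;> linarith
    refine gaussianBound_le_of_sq_le hC ht ?_
    nlinarith [sq_sqrt ht.le]

end GaussianBound

lemma abs_integral_mul_le_of_abs_le_on_support {α : Type*} [MeasurableSpace α]
    {μ : Measure α} {f w : α → ℝ} {B : ℝ} (hw : 0 ≤ w) (hw_one : ∫ x, w x ∂μ = 1)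
    (hf : ∀ x ∈ Function.support w, |f x| ≤ B) : |∫ x, f x * w x ∂μ| ≤ B := by
  have hw_int : Integrable w μ := Integrable.of_integral_ne_zero (by simp [hw_one])
  have hfw : ∀ x, ‖f x * w x‖ ≤ B * w x := by
    intro x
    by_cases hx : w x = 0
    · simp [hx]
    · rw [Real.norm_eq_abs, abs_mul, abs_of_nonneg (hw x)]
      exact mul_le_mul_of_nonneg_right (hf x hx) (hw x)
  calc |∫ x, f x * w x ∂μ| ≤ ∫ x, B * w x ∂μ :=
        norm_integral_le_of_norm_le (hw_int.const_mul B) (.of_forall hfw)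
    _ = B := by rw [integral_const_mul, hw_one, mul_one]

theorem stmt_15_general (d : ℕ)
    (Ω : Set (EuclideanSpace ℝ (Fin d)))
    (h C : ℝ) (hC : 0 < C)
    (G : ℝ → EuclideanSpace ℝ (Fin d) → EuclideanSpace ℝ (Fin d) → ℝ)
    (hG : ∀ t : ℝ, 0 < t → ∀ x y, |G t x y| ≤
      C * t ^ (-(d : ℝ) / 2) * Real.exp (-‖x - y‖ ^ 2 / (C * t)))
    (δreg : EuclideanSpace ℝ (Fin d) → EuclideanSpace ℝ (Fin d) → ℝ)
    (hsupp : ∀ y, Function.support (δreg y) ⊆ Metric.ball y h)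
    (hpos : ∀ y x, 0 ≤ δreg y x)
    (hint : ∀ y, ∫ x' in Ω, δreg y x' = 1) :
    ∃ C' : ℝ, 0 < C' ∧ ∀ t : ℝ, 0 < t → ∀ x y,
      2 * h ≤ max ‖x - y‖ (Real.sqrt t) →
      |∫ x' in Ω, G t x x' * δreg y x'| ≤
        C' * t ^ (-(d : ℝ) / 2) * Real.exp (-‖x - y‖ ^ 2 / (C' * t)) := by
  refine ⟨4 * C + 1, by positivity, fun t ht x y hmax => ?_⟩
  refine abs_integral_mul_le_of_abs_le_on_support (hpos y) (hint y) fun x' hx' => ?_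
  have hx'y : ‖x' - y‖ < h := mem_ball_iff_norm.mp (hsupp y hx')
  have htri : ‖x - y‖ ≤ ‖x - x'‖ + ‖x' - y‖ := norm_sub_le_norm_sub_add_norm_sub x x' y
  exact (hG t ht x x').trans
    (gaussianBound_le_of_lt_add hC ht (norm_nonneg _) (by linarith) hmax)

/-- Averaging a Gaussian-bounded kernel against a regularized delta function
at scale `h` preserves the Gaussian bound away from the scale `h`:
if `|G(t,x,y)| ≤ C t^{-d/2} e^{-|x-y|²/(Ct)}`, `δ̃_y ≥ 0` is supported in
`B(y,h)` with `∫ δ̃_y = 1` and `‖δ̃_y‖_∞ ≤ C h^{-d}`, then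
`Γ(t,x,y) = ∫_Ω G(t,x,x') δ̃_y(x') dx'` satisfies
`|Γ(t,x,y)| ≤ C' t^{-d/2} e^{-|x-y|²/(C't)}` whenever `max(|x-y|,√t) ≥ 2h`. -/
theorem stmt_15 (d : ℕ) (hd : 1 ≤ d)
    (Ω : Set (EuclideanSpace ℝ (Fin d))) (hΩm : MeasurableSet Ω)
    (h C : ℝ) (hh : 0 < h) (hC : 0 < C)
    (G : ℝ → EuclideanSpace ℝ (Fin d) → EuclideanSpace ℝ (Fin d) → ℝ)
    (hG : ∀ t : ℝ, 0 < t → ∀ x y, |G t x y| ≤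
      C * t ^ (-(d : ℝ) / 2) * Real.exp (-‖x - y‖ ^ 2 / (C * t)))
    (δreg : EuclideanSpace ℝ (Fin d) → EuclideanSpace ℝ (Fin d) → ℝ)
    (hmeas : ∀ y, Measurable (δreg y))
    (hsupp : ∀ y, Function.support (δreg y) ⊆ Metric.ball y h)
    (hpos : ∀ y x, 0 ≤ δreg y x)
    (hint : ∀ y, ∫ x' in Ω, δreg y x' = 1)
    (hbd : ∀ y x, δreg y x ≤ C * h ^ (-(d : ℝ))) :
    ∃ C' : ℝ, 0 < C' ∧ ∀ t : ℝ, 0 < t → ∀ x y,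
      2 * h ≤ max ‖x - y‖ (Real.sqrt t) →
      |∫ x' in Ω, G t x x' * δreg y x'| ≤
        C' * t ^ (-(d : ℝ) / 2) * Real.exp (-‖x - y‖ ^ 2 / (C' * t)) :=
  stmt_15_general d Ω h C hC G hG δreg hsupp hpos hint
end
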